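/- Consider the token-selection procedure: given a distribution D on a finite set V, a function h : V → {0,1}, and a uniformly random bit c independent of everything else, draw independent t₀, t₁ ~ D; if h(t₀) ≠ h(t₁), output the tᵦ with h(tᵦ) = c; otherwise output t₀ or t₁ each with probability 1/2. Then for every t* ∈ V, the probability that the output equals t* is exactly D(t*). -/

import Mathlib

/-! Whatever the branch, averaging over the bit `c` turns the output into a uniformly random
one of `t₀, t₁`: when `h t₀ ≠ h t₁` the two values of `c` select `t₀` once and `t₁` once. So the
output law is the law of a fair coin choice between two i.i.d. draws from `D`, which is `D`. -/

open Finset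

theorem Fintype.sum_bool_ite_eq_add {M α : Type*} [AddCommMonoid M] (f : α → M) (p : Bool)
    (a b : α) : ∑ c : Bool, f (if p = c then a else b) = f a + f b := by
  cases p <;> simp [add_comm]

theorem half_sum_bool_ite_select_else_mean {α : Type*} (P : Prop) [Decidable P] (f : α → ℝ)
    (p : Bool) (a b : α) :
    (1 / 2 : ℝ) * ∑ c : Bool, (if P then f (if p = c then a else b) else 1 / 2 * (f a + f b)) =
      1 / 2 * (f a + f b) := by
  by_cases hP : P
  · simp only [hP, if_true, Fintype.sum_bool_ite_eq_add]
  · simp only [hP, if_false, sum_const, card_univ, Fintype.card_bool, nsmul_eq_mul]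
    ring

theorem sum_sum_mul_mul_half_add {ι : Type*} [Fintype ι] (D f : ι → ℝ) (hD : ∑ i, D i = 1) :
    ∑ i, ∑ j, D i * D j * (1 / 2 * (f i + f j)) = ∑ i, D i * f i := by
  have hsplit : ∀ i j, D i * D j * (1 / 2 * (f i + f j)) =
      1 / 2 * (D i * f i) * D j + 1 / 2 * D i * (D j * f j) := fun i j => by ring
  simp only [hsplit, sum_add_distrib, ← mul_sum, ← sum_mul, hD]
  ring

theorem embedding_preserves_distribution_general {V : Type*} [Fintype V] [DecidableEq V]
    (D : V → ℝ) (hsum : ∑ x, D x = 1)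
    (h : V → Bool) (tstar : V) :
    (∑ t₀, ∑ t₁, D t₀ * D t₁ * ((1 / 2 : ℝ) * ∑ c : Bool,
      (if h t₀ ≠ h t₁ then
        (if (if h t₀ = c then t₀ else t₁) = tstar then (1 : ℝ) else 0)
      else
        (1 / 2) * ((if t₀ = tstar then (1 : ℝ) else 0) +
                   (if t₁ = tstar then (1 : ℝ) else 0))))) = D tstar := by
  let δ : V → ℝ := fun x => if x = tstar then 1 else 0
  calc _ = ∑ t₀, ∑ t₁, D t₀ * D t₁ * (1 / 2 * (δ t₀ + δ t₁)) :=
        sum_congr rfl fun t₀ _ => sum_congr rfl fun t₁ _ =>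
          congrArg _ (half_sum_bool_ite_select_else_mean _ δ (h t₀) t₀ t₁)
    _ = ∑ t, D t * δ t := sum_sum_mul_mul_half_add D δ hsum
    _ = D tstar := by simp [δ]

/-- The token-selection procedure (draw independent `t₀ t₁ ~ D`; given a uniformly
random bit `c`, if `h t₀ ≠ h t₁` output the sample hashing to `c`, otherwise output
a uniformly random one of the two) outputs each `t*` with probability exactly `D t*`. -/
theorem embedding_preserves_distribution {V : Type*} [Fintype V] [DecidableEq V]
    (D : V → ℝ) (hpos : ∀ x, 0 ≤ D x) (hsum : ∑ x, D x = 1)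
    (h : V → Bool) (tstar : V) :
    (∑ t₀, ∑ t₁, D t₀ * D t₁ * ((1 / 2 : ℝ) * ∑ c : Bool,
      (if h t₀ ≠ h t₁ then
        (if (if h t₀ = c then t₀ else t₁) = tstar then (1 : ℝ) else 0)
      else
        (1 / 2) * ((if t₀ = tstar then (1 : ℝ) else 0) +
                   (if t₁ = tstar then (1 : ℝ) else 0))))) = D tstar :=
  embedding_preserves_distribution_general D hsum h tstar
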